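/- Let q ∈ ℝ with 0 ≤ q < 1. (i) For all a, b : ℕ → ℂ with Σ_n ([n]_q!)² |a_n|² < ∞ and Σ_n ([n]_q!)² |b_n|² < ∞, the structural identity ⟨a, b⟩_{F_{2,q}} − ⟨R_q a, R_q b⟩_{F_{2,q}} = a_0 · conj(b_0) holds, i.e. Σ_n ([n]_q!)² a_n conj(b_n) − Σ_n ([n]_q!)² [n+1]_q² a_{n+1} conj(b_{n+1}) = a_0 conj(b_0), all series converging absolutely. (ii) Conversely, if w : ℕ → ℝ has w_n > 0 for all n and Σ_n w_n a_n conj(b_n) − Σ_n w_n ([n+1]_q)² a_{n+1} conj(b_{n+1}) = a_0 conj(b_0) for all finitely supported a, b, then w_n = ([n]_q!)² for all n. -/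

import Mathlib

open Finset

/-- q-bracket `[n]_q = 1 + q + ⋯ + q^(n-1)` (real version). -/
noncomputable def qBracket (q : ℝ) (n : ℕ) : ℝ := ∑ j ∈ Finset.range n, q ^ j

/-- q-factorial `[n]_q! = [1]_q [2]_q ⋯ [n]_q`, with `[0]_q! = 1`. -/
noncomputable def qFact (q : ℝ) (n : ℕ) : ℝ := ∏ i ∈ Finset.range n, qBracket q (i + 1)

/-- The q-backward-shift on coefficient sequences: `(R_q a)_n = [n+1]_q a_(n+1)`. -/
noncomputable def Rq (q : ℝ) (a : ℕ → ℂ) : ℕ → ℂ := fun n => (qBracket q (n + 1) : ℂ) * a (n + 1)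

lemma qBracket_nonneg (q : ℝ) (hq0 : 0 ≤ q) (n : ℕ) : 0 ≤ qBracket q n :=
  Finset.sum_nonneg fun j _ => pow_nonneg hq0 j

lemma qFact_nonneg (q : ℝ) (hq0 : 0 ≤ q) (n : ℕ) : 0 ≤ qFact q n :=
  Finset.prod_nonneg fun i _ => qBracket_nonneg q hq0 _

lemma qFact_succ (q : ℝ) (n : ℕ) : qFact q (n + 1) = qFact q n * qBracket q (n + 1) :=
  Finset.prod_range_succ _ _


/-- Structural identity `𝕀 − R_q* R_q = C*C` in `F_{2,q}` (with inner product
`⟨a,b⟩ = Σ ([n]_q!)² a_n conj(b_n)` and `C a = a_0`) and its converse: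
(i) for `a, b` with `Σ ([n]_q!)² |a_n|² < ∞` and `Σ ([n]_q!)² |b_n|² < ∞`, the series
`Σ ([n]_q!)² a_n conj(b_n)` and `Σ ([n]_q!)² [n+1]_q² a_(n+1) conj(b_(n+1))` converge
absolutely and `⟨a,b⟩ − ⟨R_q a, R_q b⟩ = a_0 conj(b_0)`;
(ii) conversely, if a positive weight `w` satisfies
`Σ w_n a_n conj(b_n) − Σ w_n [n+1]_q² a_(n+1) conj(b_(n+1)) = a_0 conj(b_0)` for all finitely
supported `a, b`, then `w_n = ([n]_q!)²` for all `n`. -/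
theorem structural_identity_F2q (q : ℝ) (hq0 : 0 ≤ q) (hq1 : q < 1) :
    (∀ a b : ℕ → ℂ,
      Summable (fun n : ℕ => (qFact q n) ^ 2 * ‖a n‖ ^ 2) →
      Summable (fun n : ℕ => (qFact q n) ^ 2 * ‖b n‖ ^ 2) →
      Summable (fun n : ℕ => ‖((qFact q n : ℂ)) ^ 2 * a n * (starRingEnd ℂ) (b n)‖) ∧
      Summable (fun n : ℕ => ‖((qFact q n : ℂ)) ^ 2 * ((qBracket q (n + 1) : ℂ)) ^ 2 *
        a (n + 1) * (starRingEnd ℂ) (b (n + 1))‖) ∧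
      (∑' n : ℕ, ((qFact q n : ℂ)) ^ 2 * a n * (starRingEnd ℂ) (b n)) -
        (∑' n : ℕ, ((qFact q n : ℂ)) ^ 2 * Rq q a n * (starRingEnd ℂ) (Rq q b n))
        = a 0 * (starRingEnd ℂ) (b 0)) ∧
    (∀ w : ℕ → ℝ, (∀ n, 0 < w n) →
      (∀ a b : ℕ → ℂ, (Function.support a).Finite → (Function.support b).Finite →
        (∑' n : ℕ, (w n : ℂ) * a n * (starRingEnd ℂ) (b n)) -
          (∑' n : ℕ, (w n : ℂ) * ((qBracket q (n + 1) : ℂ)) ^ 2 *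
            a (n + 1) * (starRingEnd ℂ) (b (n + 1)))
          = a 0 * (starRingEnd ℂ) (b 0)) →
      ∀ n : ℕ, w n = (qFact q n) ^ 2) := by
  constructor
  · intro a b ha hb
    set c : ℕ → ℂ := fun n => (qFact q n : ℂ) * a n with hc
    set d : ℕ → ℂ := fun n => (qFact q n : ℂ) * b n with hd
    have hcnorm : ∀ n, ‖c n‖ = qFact q n * ‖a n‖ := by
      intro n
      simp [hc, Complex.norm_real, abs_of_nonneg (qFact_nonneg q hq0 n)]
    have hdnorm : ∀ n, ‖d n‖ = qFact q n * ‖b n‖ := by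
      intro n
      simp [hd, Complex.norm_real, abs_of_nonneg (qFact_nonneg q hq0 n)]
    have hc2 : Summable (fun n => ‖c n‖ ^ 2) := by
      refine ha.congr fun n => ?_
      rw [hcnorm]; ring
    have hd2 : Summable (fun n => ‖d n‖ ^ 2) := by
      refine hb.congr fun n => ?_
      rw [hdnorm]; ring
    have hcd : Summable (fun n => ‖c n‖ * ‖d n‖) := by
      refine Summable.of_nonneg_of_le (fun n => by positivity)
        (fun n => ?_) (((hc2.add hd2).div_const 2))
      have := sq_nonneg (‖c n‖ - ‖d n‖)
      nlinarith [norm_nonneg (c n), norm_nonneg (d n)]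
    have key1 : ∀ n, ‖((qFact q n : ℂ)) ^ 2 * a n * (starRingEnd ℂ) (b n)‖ = ‖c n‖ * ‖d n‖ := by
      intro n
      rw [hcnorm, hdnorm]
      simp [norm_mul, Complex.norm_real, abs_of_nonneg (qFact_nonneg q hq0 n), sq]
      ring
    have key2 : ∀ n, ((qFact q n : ℂ)) ^ 2 * ((qBracket q (n + 1) : ℂ)) ^ 2
        * a (n+1) * (starRingEnd ℂ) (b (n+1)) = c (n+1) * (starRingEnd ℂ) (d (n+1)) := by
      intro n
      simp only [hc, hd, map_mul, Complex.conj_ofReal, qFact_succ]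
      push_cast
      ring
    have S1 : Summable (fun n : ℕ => ‖((qFact q n : ℂ)) ^ 2 * a n * (starRingEnd ℂ) (b n)‖) :=
      hcd.congr fun n => (key1 n).symm
    have hf : Summable (fun n => c n * (starRingEnd ℂ) (d n)) := by
      apply Summable.of_norm
      refine hcd.congr fun n => ?_
      simp [norm_mul]
    have hfs : Summable (fun n => c (n+1) * (starRingEnd ℂ) (d (n+1))) :=
      (summable_nat_add_iff (f := fun n => c n * (starRingEnd ℂ) (d n)) 1).2 hf
    refine ⟨S1, ?_, ?_⟩
    · apply Summable.of_norm
      refine (((summable_nat_add_iff (f := fun n => ‖c n‖ * ‖d n‖) 1).2 hcd)).congr fun n => ?_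
      rw [key2]; simp [norm_mul]
    · have e1 : (∑' n : ℕ, ((qFact q n : ℂ)) ^ 2 * a n * (starRingEnd ℂ) (b n))
          = ∑' n, c n * (starRingEnd ℂ) (d n) := by
        congr 1; funext n
        simp only [hc, hd, map_mul, Complex.conj_ofReal]
        ring
      have e2 : (∑' n : ℕ, ((qFact q n : ℂ)) ^ 2 * Rq q a n * (starRingEnd ℂ) (Rq q b n))
          = ∑' n, c (n+1) * (starRingEnd ℂ) (d (n+1)) := by
        congr 1; funext n
        rw [← key2 n]
        simp only [Rq, map_mul, Complex.conj_ofReal]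
        ring
      rw [e1, e2, Summable.tsum_eq_zero_add hf, add_sub_cancel_right]
      simp [hc, hd, qFact]
  · intro w hw hyp n
    have base : ∀ k : ℕ, (w k : ℂ) - (if k = 0 then 0 else
        (w (k-1) : ℂ) * ((qBracket q k : ℂ))^2) = if k = 0 then 1 else 0 := by
      intro k
      have := hyp (fun n => if n = k then 1 else 0) (fun n => if n = k then 1 else 0)
        ((Set.finite_singleton k).subset (Function.support_subset_iff'.2 (by intro x hx; simpa using hx)))
        ((Set.finite_singleton k).subset (Function.support_subset_iff'.2 (by intro x hx; simpa using hx)))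
      have t1 : (∑' m : ℕ, (w m : ℂ) * (if m = k then (1:ℂ) else 0) *
          (starRingEnd ℂ) (if m = k then (1:ℂ) else 0)) = (w k : ℂ) := by
        rw [tsum_eq_single k (by intro m hm; simp [hm])]
        simp
      have t2 : (∑' m : ℕ, (w m : ℂ) * ((qBracket q (m + 1) : ℂ)) ^ 2 *
          (if m + 1 = k then (1:ℂ) else 0) * (starRingEnd ℂ) (if m + 1 = k then (1:ℂ) else 0))
          = if k = 0 then 0 else (w (k-1) : ℂ) * ((qBracket q k : ℂ))^2 := by
        rcases k with _ | j
        · simp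
        · rw [tsum_eq_single j (by intro m hm; simp [Nat.succ_ne_succ.2 hm, hm])]
          simp
      rw [t1, t2] at this
      clear hyp t1 t2
      split_ifs at this ⊢ <;> simp_all <;> omega
    induction n with
    | zero =>
      have := base 0
      simp at this
      have : w 0 = 1 := by exact_mod_cast this
      simp [this, qFact]
    | succ m ih =>
      have := base (m+1)
      simp at this
      have h2 : (w (m+1) : ℂ) = (w m : ℂ) * ((qBracket q (m+1) : ℂ))^2 := by
        linear_combination this
      have h3 : w (m+1) = w m * (qBracket q (m+1))^2 := by exact_mod_cast h2
      rw [h3, ih, qFact_succ]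
      ring
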